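/- Let A be an indecomposable bounded linear operator on a semiunitary space U with 0 ≠ U₀ ≠ U, with induced operators A₀ on U₀ and A₁ on U/U₀. For every eigenvalue λ of A₀ and every fixed k ≥ 1, the geometric multiplicity of λ in A₁ (i.e., dim ker(A₁ − λ)) is greater than or equal to the number of Jordan blocks J_k(λ) of size exactly k in the Jordan canonical form of A₀. -/

import Mathlib

/-!
Put `N = A - λ`. The count of blocks `J_k(λ)` is `d (k-1) - 2 d k + d (k+1)` with
`d j = dim Nʲ U₀`, and `dim ker (A₁ - λ) = dim V - dim (N V + U₀)`, the corank of `N` on `V / U₀`.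

Indecomposability forces `ker N ∩ Nᵐ U₀ ⊆ Nᵐ⁺¹ V`. Otherwise pick `u ∈ U₀` with `Nᵐ⁺¹ u = 0` and
`Nᵐ u ∉ Nᵐ⁺¹ V`, and a functional `f` vanishing on `Nᵐ⁺¹ V` with `f (Nᵐ u) ≠ 0`. The operator
`P x = ∑_{i+j=m} f (Nⁱ x) • Nʲ u` commutes with `N`, has range inside the orbit of `u`, and scales
`Nᵐ u` by `f (Nᵐ u)`, so the Fitting decomposition `ker Pⁿ ⊕ range Pⁿ` splits off a nonzero
`N`-invariant piece of `U₀`; it is orthogonal to everything because isotropic vectors of a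
positive semidefinite form lie in its radical.

Counting then takes two steps: for `U ⊆ R` with `N U ⊆ U` and `ker N ∩ U ⊆ N R`, one has
`dim U - 2 dim N U + dim N² U ≤ dim R - dim (N R + U)`, applied to `U = Nᵐ U₀`, `R = Nᵐ V`; and the
codimension of `N V + U₀` in `V` can only drop under `Nᵐ`.
-/

open Module LinearMap Submodule Finset

section Counting

variable {K V W : Type*} [Field K] [AddCommGroup V] [Module K V] [AddCommGroup W] [Module K W]

theorem LinearMap.finrank_range_restrict (N : Module.End K V) {U : Submodule K V}
    (h : ∀ x ∈ U, N x ∈ U) :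
    finrank K (range (N.restrict h)) = finrank K (U.map N) := by
  rw [range_restrict]
  exact (comapSubtypeEquivOfLe (map_le_iff_le_comap.mpr h)).finrank_eq

theorem Module.End.map_map_pow (N : Module.End K V) (U : Submodule K V) (j : ℕ) :
    (U.map (N ^ j)).map N = U.map (N ^ (j + 1)) := by
  rw [← map_comp, ← mul_eq_comp, ← pow_succ']

variable [FiniteDimensional K V]

theorem Submodule.finrank_map_add_finrank_inf_ker (f : V →ₗ[K] W) (S : Submodule K V) :
    finrank K (S.map f) + finrank K ↥(S ⊓ ker f) = finrank K S := by
  rw [← range_domRestrict, ← (f.domRestrict S).finrank_range_add_finrank_ker, ker_domRestrict,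
    ← map_comap_subtype, finrank_map_subtype_eq]

theorem Submodule.finrank_map_add_finrank_le_of_le (f : V →ₗ[K] W) {S R : Submodule K V}
    (hSR : S ≤ R) :
    finrank K (R.map f) + finrank K S ≤ finrank K R + finrank K (S.map f) := by
  have hS := S.finrank_map_add_finrank_inf_ker f
  have hR := R.finrank_map_add_finrank_inf_ker f
  have := finrank_mono (inf_le_inf_right (ker f) hSR)
  omega

theorem Module.End.finrank_add_finrank_map_sup_add_finrank_map_map_le (N : Module.End K V)
    {U R : Submodule K V} (hUR : U ≤ R) (hU : U.map N ≤ U) (hker : U ⊓ ker N ≤ R.map N) :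
    finrank K U + finrank K ↥(R.map N ⊔ U) + finrank K ((U.map N).map N) ≤
      finrank K R + 2 * finrank K (U.map N) := by
  have hNU : U.map N ≤ R.map N ⊓ U := le_inf (map_mono hUR) hU
  have hW : finrank K ((U.map N).map N) + finrank K ↥(U ⊓ ker N) ≤
      finrank K ↥(R.map N ⊓ U) := by
    rw [← (R.map N ⊓ U).finrank_map_add_finrank_inf_ker N]
    exact add_le_add (finrank_mono (map_mono hNU))
      (finrank_mono (le_inf (le_inf hker inf_le_left) inf_le_right))
  have hUdim := U.finrank_map_add_finrank_inf_ker N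
  have hRdim := R.finrank_map_add_finrank_inf_ker N
  have hker_le := finrank_mono (inf_le_inf_right (ker N) hUR)
  have := finrank_sup_add_finrank_inf_eq (R.map N) U
  omega

theorem Submodule.finrank_ker_mapQ_add_finrank_range_sup (N : Module.End K V)
    (U : Submodule K V) (h : U ≤ U.comap N) :
    finrank K (ker (U.mapQ U N h)) + finrank K ↥(range N ⊔ U) = finrank K V := by
  have hrange := (U.mapQ U N h).finrank_range_add_finrank_ker
  rw [range_mapQ] at hrange
  have hmkQ := (range N).finrank_map_add_finrank_inf_ker U.mkQ
  rw [ker_mkQ] at hmkQ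
  have := U.finrank_quotient_add_finrank
  have := finrank_sup_add_finrank_inf_eq (range N) U
  omega

theorem Module.End.finrank_map_pow_add_finrank_range_sup_le (N : Module.End K V)
    {U : Submodule K V} (hU : U.map N ≤ U) (m : ℕ)
    (hker : U.map (N ^ m) ⊓ ker N ≤ range (N ^ (m + 1))) :
    finrank K (U.map (N ^ m)) + finrank K (U.map (N ^ (m + 1 + 1))) + finrank K ↥(range N ⊔ U) ≤
      finrank K V + 2 * finrank K (U.map (N ^ (m + 1))) := by
  have hrange : (range (N ^ m)).map N = range (N ^ (m + 1)) := by
    rw [← range_comp, ← mul_eq_comp, ← pow_succ']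
  have hrange' : (range N).map (N ^ m) = range (N ^ (m + 1)) := by
    rw [← range_comp, ← mul_eq_comp, ← pow_succ]
  have hNU : (U.map (N ^ m)).map N ≤ U.map (N ^ m) := by
    rw [N.map_map_pow, pow_succ, mul_eq_comp, map_comp]
    exact map_mono hU
  have hbase := N.finrank_add_finrank_map_sup_add_finrank_map_map_le
    (U := U.map (N ^ m)) (R := range (N ^ m)) map_le_range hNU (hrange ▸ hker)
  rw [N.map_map_pow, N.map_map_pow, hrange] at hbase
  have htransfer := (range N ⊔ U).finrank_map_add_finrank_le_of_le (N ^ m) le_top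
  rw [Submodule.map_sup, hrange', ← range_eq_map, finrank_top] at htransfer
  omega

end Counting

section Splitting

variable {K V : Type*} [Field K] [AddCommGroup V] [Module K V]

noncomputable def Module.End.chainMap (N : Module.End K V) (f : V →ₗ[K] K) (u : V) (m : ℕ) :
    Module.End K V :=
  ∑ p ∈ antidiagonal m, (f ∘ₗ N ^ p.1).smulRight ((N ^ p.2) u)

namespace Module.End

variable {N : Module.End K V} {f : V →ₗ[K] K} {u : V} {m : ℕ}

theorem chainMap_apply (x : V) :
    N.chainMap f u m x = ∑ p ∈ antidiagonal m, f ((N ^ p.1) x) • (N ^ p.2) u := by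
  simp [chainMap]

theorem commute_chainMap (hf : ∀ x, f ((N ^ (m + 1)) x) = 0) (hu : (N ^ (m + 1)) u = 0) :
    Commute (N.chainMap f u m) N := by
  ext x
  have hright : ∑ p ∈ antidiagonal (m + 1), f ((N ^ p.1) x) • (N ^ p.2) u =
      N.chainMap f u m (N x) := by
    rw [Nat.sum_antidiagonal_succ, hu, smul_zero, zero_add, chainMap_apply]
    simp only [pow_succ, mul_apply]
  have hleft : ∑ p ∈ antidiagonal (m + 1), f ((N ^ p.1) x) • (N ^ p.2) u =
      N (N.chainMap f u m x) := by
    rw [Nat.sum_antidiagonal_succ', hf, zero_smul, zero_add, chainMap_apply, map_sum]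
    simp only [map_smul, pow_succ', mul_apply]
  rw [mul_apply, mul_apply, ← hright, hleft]

theorem chainMap_apply_pow_self (hu : (N ^ (m + 1)) u = 0) :
    N.chainMap f u m ((N ^ m) u) = f ((N ^ m) u) • (N ^ m) u := by
  rw [chainMap_apply, sum_eq_single (0, m)]
  · simp
  · rintro ⟨_ | i, j⟩ hij hne
    · simp_all
    rw [← mul_apply, ← pow_add, show i + 1 + m = i + (m + 1) by omega, pow_add, mul_apply, hu,
      map_zero, map_zero, zero_smul]
  · simp

theorem range_chainMap_le : range (N.chainMap f u m) ≤ span K (Set.range fun j ↦ (N ^ j) u) := by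
  rintro _ ⟨x, rfl⟩
  rw [chainMap_apply]
  exact sum_mem fun p _ ↦ smul_mem _ _ (subset_span ⟨p.2, rfl⟩)

theorem exists_isCompl_of_pow_apply_notMem_range [FiniteDimensional K V]
    (hu : (N ^ (m + 1)) u = 0) (hnot : (N ^ m) u ∉ range (N ^ (m + 1))) :
    ∃ W₁ W₂ : Submodule K V, IsCompl W₁ W₂ ∧ W₂ ≠ ⊥ ∧
      W₂ ≤ span K (Set.range fun j ↦ (N ^ j) u) ∧
      W₁ ∈ N.invtSubmodule ∧ W₂ ∈ N.invtSubmodule := by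
  obtain ⟨f, hfu, hf⟩ := exists_le_ker_of_notMem hnot
  set P := N.chainMap f u m
  have hPN : Commute P N := commute_chainMap (fun x ↦ hf (mem_range_self _ x)) hu
  obtain ⟨n, hcompl, hn⟩ :=
    (P.eventually_isCompl_ker_pow_range_pow.and (Filter.eventually_ge_atTop 1)).exists
  have hcomm : Commute (P ^ n) N := hPN.pow_left n
  have hvec : P.HasEigenvector (f ((N ^ m) u)) ((N ^ m) u) :=
    hasEigenvector_iff.mpr ⟨mem_eigenspace_iff.mpr (chainMap_apply_pow_self hu),
      fun h ↦ hnot (h ▸ zero_mem _)⟩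
  refine ⟨ker (P ^ n), range (P ^ n), hcompl, ?_, ?_, ?_, ?_⟩
  · refine (Submodule.ne_bot_iff _).mpr ⟨_, mem_range_self _ ((N ^ m) u), ?_⟩
    rw [hvec.pow_apply]
    exact smul_ne_zero (pow_ne_zero _ hfu) hvec.2
  · obtain ⟨n, rfl⟩ := Nat.exists_eq_add_of_le' hn
    rw [pow_succ', mul_eq_comp]
    exact (range_comp_le_range _ _).trans range_chainMap_le
  · intro x hx
    rw [mem_comap, mem_ker, ← mul_apply, hcomm.eq, mul_apply, mem_ker.mp hx, map_zero]
  · rintro _ ⟨y, rfl⟩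
    exact ⟨N y, by rw [← mul_apply, hcomm.eq, mul_apply]⟩

end Module.End

end Splitting

theorem LinearMap.apply_eq_zero_of_apply_self_eq_zero {𝕜 V : Type*} [RCLike 𝕜] [AddCommGroup V]
    [Module 𝕜 V] (B : V →ₗ⋆[𝕜] V →ₗ[𝕜] 𝕜) (hHerm : ∀ u v : V, star (B u v) = B v u)
    (hPos : ∀ u : V, 0 ≤ RCLike.re (B u u)) {v : V} (hv : B v v = 0) (u : V) : B u v = 0 := by
  let _ : PreInnerProductSpace.Core 𝕜 V :=
    { inner := fun x y ↦ B x y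
      conj_inner_symm := fun x y ↦ hHerm y x
      re_inner_nonneg := hPos
      add_left := fun x y z ↦ by simp
      smul_left := fun x y r ↦ by simp }
  have hCS := InnerProductSpace.Core.inner_mul_inner_self_le (𝕜 := 𝕜) u v
  change ‖B u v‖ * ‖B v u‖ ≤ RCLike.re (B u u) * RCLike.re (B v v) at hCS
  rw [hv, map_zero, mul_zero, ← hHerm u v, norm_star] at hCS
  exact norm_eq_zero.mp (mul_self_eq_zero.mp (le_antisymm hCS (mul_self_nonneg _)))

section Indecomposable

variable {V : Type*} [AddCommGroup V] [Module ℂ V]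

def IsOrthIndecomposable (B : V →ₗ⋆[ℂ] V →ₗ[ℂ] ℂ) (A : V →ₗ[ℂ] V) : Prop :=
  ¬ ∃ W₁ W₂ : Submodule ℂ V, W₁ ≠ ⊥ ∧ W₂ ≠ ⊥ ∧ W₁ ⊓ W₂ = ⊥ ∧ W₁ ⊔ W₂ = ⊤ ∧
    (∀ u ∈ W₁, A u ∈ W₁) ∧ (∀ u ∈ W₂, A u ∈ W₂) ∧ (∀ u ∈ W₁, ∀ v ∈ W₂, B u v = 0)

variable {B : V →ₗ⋆[ℂ] V →ₗ[ℂ] ℂ} {A : V →ₗ[ℂ] V}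

theorem IsOrthIndecomposable.sub_smul (hA : IsOrthIndecomposable B A) (c : ℂ) :
    IsOrthIndecomposable B (A - c • 1) := by
  rintro ⟨W₁, W₂, h₁, h₂, hinf, hsup, hinv₁, hinv₂, horth⟩
  have hA_eq (x : V) : A x = (A - c • 1) x + c • x := by simp
  refine hA ⟨W₁, W₂, h₁, h₂, hinf, hsup, fun x hx ↦ ?_, fun x hx ↦ ?_, horth⟩
  · rw [hA_eq]; exact add_mem (hinv₁ x hx) (smul_mem _ c hx)
  · rw [hA_eq]; exact add_mem (hinv₂ x hx) (smul_mem _ c hx)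

theorem IsOrthIndecomposable.map_pow_inf_ker_le_range_pow_succ [FiniteDimensional ℂ V]
    (hA : IsOrthIndecomposable B A) {U₀ : Submodule ℂ V} (hrad : ∀ v, ∀ u ∈ U₀, B v u = 0)
    (htop : U₀ ≠ ⊤) (hinv : ∀ u ∈ U₀, A u ∈ U₀) (m : ℕ) :
    U₀.map (A ^ m) ⊓ ker A ≤ range (A ^ (m + 1)) := by
  rintro _ ⟨⟨u, hu, rfl⟩, hker⟩
  by_contra hnot
  have hu' : (A ^ (m + 1)) u = 0 := by rwa [pow_succ', Module.End.mul_apply]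
  obtain ⟨W₁, W₂, hcompl, hW₂, horbit, hinv₁, hinv₂⟩ :=
    Module.End.exists_isCompl_of_pow_apply_notMem_range hu' hnot
  have hW₂U₀ : W₂ ≤ U₀ := horbit.trans <| span_le.mpr <| Set.range_subset_iff.mpr
    fun j ↦ Module.End.pow_apply_mem_of_forall_mem j hinv u hu
  refine hA ⟨W₁, W₂, ?_, hW₂, hcompl.inf_eq_bot, hcompl.sup_eq_top, hinv₁, hinv₂,
    fun a _ b hb ↦ hrad a b (hW₂U₀ hb)⟩
  rintro rfl
  have := hcompl.sup_eq_top
  rw [bot_sup_eq] at this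
  exact htop (top_le_iff.mp (this ▸ hW₂U₀))

end Indecomposable

theorem stmt_15_general {V : Type} [AddCommGroup V] [Module ℂ V] [FiniteDimensional ℂ V]
    (B : V →ₗ⋆[ℂ] V →ₗ[ℂ] ℂ)
    (hHerm : ∀ u v : V, star (B u v) = B v u)
    (hPos : ∀ u : V, 0 ≤ (B u u).re)
    (U₀ : Submodule ℂ V) (hU₀ : ∀ u : V, u ∈ U₀ ↔ B u u = 0)
    (htop : U₀ ≠ ⊤)
    (A : V →ₗ[ℂ] V) (hinv : ∀ u ∈ U₀, A u ∈ U₀)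
    (hindec : ¬ ∃ W₁ W₂ : Submodule ℂ V, W₁ ≠ ⊥ ∧ W₂ ≠ ⊥ ∧
      W₁ ⊓ W₂ = ⊥ ∧ W₁ ⊔ W₂ = ⊤ ∧
      (∀ u ∈ W₁, A u ∈ W₁) ∧ (∀ u ∈ W₂, A u ∈ W₂) ∧
      (∀ u ∈ W₁, ∀ v ∈ W₂, B u v = 0))
    (lam : ℂ)
    (k : ℕ) (hk : 1 ≤ k)
    (rk : ℕ → ℕ)
    (hrk : ∀ j : ℕ, rk j = Module.finrank ℂ
      (LinearMap.range (((A.restrict hinv : Module.End ℂ U₀) - lam • 1) ^ j))) :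
    (rk (k - 1) : ℤ) - 2 * (rk k : ℤ) + (rk (k + 1) : ℤ) ≤
      (Module.finrank ℂ
        (Module.End.eigenspace (Submodule.mapQ U₀ U₀ A hinv) lam) : ℤ) := by
  obtain ⟨m, rfl⟩ : ∃ m, k = m + 1 := ⟨k - 1, by omega⟩
  set N := A - lam • 1
  have hN : ∀ x ∈ U₀, N x ∈ U₀ := fun x hx ↦ sub_mem (hinv x hx) (smul_mem _ lam hx)
  have hrk' (j : ℕ) : rk j = finrank ℂ (U₀.map (N ^ j)) := by
    rw [hrk, show A.restrict hinv - lam • 1 = N.restrict hN by ext; simp [N],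
      Module.End.pow_restrict, finrank_range_restrict]
  have hrad : ∀ v, ∀ u ∈ U₀, B v u = 0 := fun v u hu ↦
    apply_eq_zero_of_apply_self_eq_zero B hHerm hPos ((hU₀ u).mp hu) v
  have hstar := (IsOrthIndecomposable.sub_smul hindec lam).map_pow_inf_ker_le_range_pow_succ
    hrad htop hN m
  have hcount :=
    Module.End.finrank_map_pow_add_finrank_range_sup_le N (map_le_iff_le_comap.mpr hN) m hstar
  have heigen := U₀.finrank_ker_mapQ_add_finrank_range_sup N hN
  rw [← show Submodule.mapQ U₀ U₀ A hinv - lam • 1 = U₀.mapQ U₀ N hN by ext; simp [N],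
    ← Module.End.eigenspace_def] at heigen
  simp only [hrk', Nat.add_sub_cancel]
  omega

/-- For an indecomposable bounded operator `A` on a semiunitary space
with `0 ≠ U₀ ≠ U`, every eigenvalue `λ` of `A₀ = A|_{U₀}`, and every `k ≥ 1`, the
geometric multiplicity of `λ` in the induced operator `A₁` on `U/U₀` is at least the
number of Jordan blocks `J_k(λ)` of size exactly `k` in the Jordan form of `A₀`, the
latter computed as `rank (A₀-λ)^{k-1} - 2 rank (A₀-λ)^k + rank (A₀-λ)^{k+1}`. -/
theorem stmt_15 {V : Type} [AddCommGroup V] [Module ℂ V] [FiniteDimensional ℂ V]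
    (B : V →ₗ⋆[ℂ] V →ₗ[ℂ] ℂ)
    (hHerm : ∀ u v : V, star (B u v) = B v u)
    (hPos : ∀ u : V, 0 ≤ (B u u).re)
    (U₀ : Submodule ℂ V) (hU₀ : ∀ u : V, u ∈ U₀ ↔ B u u = 0)
    (hbot : U₀ ≠ ⊥) (htop : U₀ ≠ ⊤)
    (A : V →ₗ[ℂ] V) (hinv : ∀ u ∈ U₀, A u ∈ U₀)
    (hindec : ¬ ∃ W₁ W₂ : Submodule ℂ V, W₁ ≠ ⊥ ∧ W₂ ≠ ⊥ ∧
      W₁ ⊓ W₂ = ⊥ ∧ W₁ ⊔ W₂ = ⊤ ∧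
      (∀ u ∈ W₁, A u ∈ W₁) ∧ (∀ u ∈ W₂, A u ∈ W₂) ∧
      (∀ u ∈ W₁, ∀ v ∈ W₂, B u v = 0))
    (lam : ℂ) (hlam : Module.End.HasEigenvalue (A.restrict hinv) lam)
    (k : ℕ) (hk : 1 ≤ k)
    (rk : ℕ → ℕ)
    (hrk : ∀ j : ℕ, rk j = Module.finrank ℂ
      (LinearMap.range (((A.restrict hinv : Module.End ℂ U₀) - lam • 1) ^ j))) :
    (rk (k - 1) : ℤ) - 2 * (rk k : ℤ) + (rk (k + 1) : ℤ) ≤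
      (Module.finrank ℂ
        (Module.End.eigenspace (Submodule.mapQ U₀ U₀ A hinv) lam) : ℤ) :=
  stmt_15_general B hHerm hPos U₀ hU₀ htop A hinv hindec lam k hk rk hrk
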